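/- arXiv:1502.04281 — 5 statements merged into one kernel-verified Lean document; each statement's English description precedes it below -/
import Mathlib

section
/- Let v and w be vectors in ℝ^n and let 1 ≤ k ≤ n. If Ŝ ⊆ [n] with |Ŝ| = k maximizes w(S) over all subsets S of cardinality k, and S* ⊆ [n] with |S*| = k maximizes v(S) over all subsets S of cardinality k, then w(Ŝ) ≥ v(S*) − √k·‖v − w‖₂, where ‖x‖₂ denotes the Euclidean norm. -/
/-! Maximality of `Ŝ` gives `w(Ŝ) ≥ w(S*)`, and Cauchy–Schwarz on the `k` coordinates of `S*`
gives `v(S*) - w(S*) ≤ √k · ‖v - w‖₂`. -/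

open Finset

theorem sum_le_sqrt_card_mul_sqrt_sum_sq {ι : Type*} [Fintype ι] (s : Finset ι) (f : ι → ℝ) :
    ∑ i ∈ s, f i ≤ √(#s : ℝ) * √(∑ i, f i ^ 2) := by
  rw [← Real.sqrt_mul (Nat.cast_nonneg _)]
  refine Real.le_sqrt_of_sq_le (sq_sum_le_card_mul_sum_sq.trans ?_)
  exact mul_le_mul_of_nonneg_left
    (sum_le_sum_of_subset_of_nonneg (subset_univ s) fun i _ _ => sq_nonneg (f i)) (Nat.cast_nonneg _)

theorem topk_cross_bound_general
    (n k : ℕ)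
    (v w : Fin n → ℝ)
    (Shat Sstar : Finset (Fin n)) (hSstar : Sstar.card = k)
    (hShatMax : ∀ T : Finset (Fin n), T.card = k → ∑ i ∈ T, w i ≤ ∑ i ∈ Shat, w i) :
    ∑ i ∈ Sstar, v i - Real.sqrt k * Real.sqrt (∑ i, (v i - w i) ^ 2)
      ≤ ∑ i ∈ Shat, w i := by
  have hdiff := sum_le_sqrt_card_mul_sqrt_sum_sq Sstar (v - w)
  simp only [hSstar, Pi.sub_apply] at hdiff
  calc ∑ i ∈ Sstar, v i - Real.sqrt k * Real.sqrt (∑ i, (v i - w i) ^ 2)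
      ≤ ∑ i ∈ Sstar, v i - ∑ i ∈ Sstar, (v i - w i) := sub_le_sub_left hdiff _
    _ = ∑ i ∈ Sstar, w i := by rw [sum_sub_distrib]; ring
    _ ≤ ∑ i ∈ Shat, w i := hShatMax Sstar hSstar

/-- For vectors `v, w ∈ ℝⁿ` and `1 ≤ k ≤ n`, if `Ŝ` maximizes
`w(S)` and `S*` maximizes `v(S)` over sets of cardinality `k`, then
`w(Ŝ) ≥ v(S*) - √k · ‖v - w‖₂`. -/
theorem topk_cross_bound
    (n k : ℕ) (hk1 : 1 ≤ k) (hkn : k ≤ n)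
    (v w : Fin n → ℝ)
    (Shat Sstar : Finset (Fin n)) (hShat : Shat.card = k) (hSstar : Sstar.card = k)
    (hShatMax : ∀ T : Finset (Fin n), T.card = k → ∑ i ∈ T, w i ≤ ∑ i ∈ Shat, w i)
    (hSstarMax : ∀ T : Finset (Fin n), T.card = k → ∑ i ∈ T, v i ≤ ∑ i ∈ Sstar, v i) :
    ∑ i ∈ Sstar, v i - Real.sqrt k * Real.sqrt (∑ i, (v i - w i) ^ 2)
      ≤ ∑ i ∈ Shat, w i :=
  topk_cross_bound_general n k v w Shat Sstar hSstar hShatMax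
end

section
/- Let Q be an n×n matrix with nonnegative entries whose columns each sum to 1, let p_T ∈ (0,1], and let π be a probability vector satisfying Qπ = π and π_i ≥ p_T/n for all i. Let u be the uniform distribution on [n]. Then for every integer t ≥ 0, Σ_{τ=0}^{t} ‖Q^τ u‖₂² ≤ 1/n + t·‖π‖_∞ / p_T, where ‖x‖₂ is the Euclidean norm and ‖x‖_∞ the maximum entry in absolute value. -/
/-!
Nonnegativity of `Q` together with `Q π = π` makes each set `{x | x ≤ c • π}` invariant, and
`u ≤ π / p_T` by the lower bound on `π`. Hence every `Q^τ u` is a probability vector with entries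
at most `‖π‖_∞ / p_T`, so its collision probability `∑ (Q^τ u)_i²` is at most `‖π‖_∞ / p_T`;
the `τ = 0` term is `‖u‖₂² = 1/n`.
-/

open Finset Matrix

variable {R ι : Type*} [Fintype ι]

theorem Matrix.pow_mulVec_eq_self [Semiring R] [DecidableEq ι] {M : Matrix ι ι R} {v : ι → R}
    (hv : M *ᵥ v = v) (k : ℕ) : (M ^ k) *ᵥ v = v := by
  induction k with
  | zero => exact one_mulVec v
  | succ k ih => rw [pow_succ, ← mulVec_mulVec, hv, ih]

theorem Matrix.mulVec_mono [Semiring R] [PartialOrder R] [IsOrderedRing R] {m : Type*}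
    {M : Matrix m ι R} (hM : ∀ i j, 0 ≤ M i j) {x y : ι → R} (hxy : x ≤ y) :
    M *ᵥ x ≤ M *ᵥ y :=
  fun i => sum_le_sum fun j _ => mul_le_mul_of_nonneg_left (hxy j) (hM i j)

theorem Matrix.mulVec_le_smul_of_le_smul [CommSemiring R] [PartialOrder R] [IsOrderedRing R]
    {M : Matrix ι ι R} (hM : ∀ i j, 0 ≤ M i j) {v x : ι → R} (hv : M *ᵥ v = v) {c : R}
    (hx : x ≤ c • v) : M *ᵥ x ≤ c • v :=
  calc M *ᵥ x ≤ M *ᵥ (c • v) := mulVec_mono hM hx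
    _ = c • v := by rw [mulVec_smul, hv]

theorem Finset.sum_sq_le_of_le [Semiring R] [PartialOrder R] [IsOrderedRing R] {w : ι → R}
    (hw0 : ∀ i, 0 ≤ w i) {c : R} (hwc : ∀ i, w i ≤ c) (hw1 : ∑ i, w i ≤ 1) (hc : 0 ≤ c) :
    ∑ i, w i ^ 2 ≤ c :=
  calc ∑ i, w i ^ 2 ≤ ∑ i, c * w i :=
        sum_le_sum fun i _ => by rw [sq]; exact mul_le_mul_of_nonneg_right (hwc i) (hw0 i)
    _ = c * ∑ i, w i := (mul_sum _ _ _).symm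
    _ ≤ c := by simpa using mul_le_mul_of_nonneg_left hw1 hc

theorem Matrix.sum_sq_pow_mulVec_le_of_le_smul [DecidableEq ι] {Q : Matrix ι ι ℝ}
    (hQ : Q ∈ colStochastic ℝ ι) {π x : ι → ℝ} (hfix : Q *ᵥ π = π) (hx0 : ∀ i, 0 ≤ x i)
    (hx1 : ∑ i, x i ≤ 1) {c : ℝ} (hc : 0 ≤ c) (hxc : x ≤ c • π) (τ : ℕ) :
    ∑ i, ((Q ^ τ) *ᵥ x) i ^ 2 ≤ c * ⨆ i, |π i| := by
  have hQτ := pow_mem hQ τ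
  refine sum_sq_le_of_le (nonneg_mulVec_of_mem_colStochastic hQτ hx0) (fun i => ?_)
    ((sum_mulVec_of_mem_colStochastic hQτ).trans_le hx1)
    (mul_nonneg hc (Real.iSup_nonneg fun i => abs_nonneg _))
  calc ((Q ^ τ) *ᵥ x) i ≤ c * π i :=
        mulVec_le_smul_of_le_smul hQτ.1 (pow_mulVec_eq_self hfix τ) hxc i
    _ ≤ c * ⨆ i, |π i| := by
        gcongr
        exact (le_abs_self _).trans (le_ciSup (f := fun i => |π i|) (Set.finite_range _).bddAbove i)

theorem walk_collision_sum_bound_general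
    (n : ℕ) (Q : Matrix (Fin n) (Fin n) ℝ) (pT : ℝ)
    (hQ0 : ∀ i j, 0 ≤ Q i j) (hQcol : ∀ j, ∑ i, Q i j = 1)
    (hpT0 : 0 < pT)
    (π : Fin n → ℝ)
    (hfix : Q.mulVec π = π) (hlb : ∀ i, pT / (n : ℝ) ≤ π i)
    (u : Fin n → ℝ) (hu : ∀ i, u i = 1 / (n : ℝ))
    (t : ℕ) :
    ∑ τ ∈ Finset.range (t + 1), ∑ i, (((Q ^ τ).mulVec u) i) ^ 2
      ≤ 1 / (n : ℝ) + t * (⨆ i, |π i|) / pT := by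
  set M := ⨆ i, |π i|
  have hQ : Q ∈ colStochastic ℝ (Fin n) := mem_colStochastic_iff_sum.2 ⟨hQ0, hQcol⟩
  have hu0 : ∀ i, 0 ≤ u i := fun i => by rw [hu]; positivity
  have hu_sum : ∑ i, u i ≤ 1 := by
    simp only [hu, sum_const, card_univ, Fintype.card_fin, nsmul_eq_mul, mul_one_div]
    exact div_self_le_one _
  have hu_le : u ≤ pT⁻¹ • π := fun i => by
    rw [Pi.smul_apply, smul_eq_mul, le_inv_mul_iff₀ hpT0, hu, mul_one_div]
    exact hlb i
  have hstep (τ : ℕ) : ∑ i, ((Q ^ τ) *ᵥ u) i ^ 2 ≤ M / pT := by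
    simpa only [inv_mul_eq_div] using
      sum_sq_pow_mulVec_le_of_le_smul hQ hfix hu0 hu_sum (inv_nonneg.2 hpT0.le) hu_le τ
  have hstart : ∑ i, ((Q ^ 0) *ᵥ u) i ^ 2 ≤ 1 / n := by
    simpa using sum_sq_le_of_le hu0 (fun i => (hu i).le) hu_sum (by positivity)
  calc ∑ τ ∈ range (t + 1), ∑ i, ((Q ^ τ) *ᵥ u) i ^ 2
      = ∑ τ ∈ range t, ∑ i, ((Q ^ (τ + 1)) *ᵥ u) i ^ 2 + ∑ i, ((Q ^ 0) *ᵥ u) i ^ 2 :=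
        sum_range_succ' _ _
    _ ≤ t • (M / pT) + 1 / n :=
        add_le_add ((sum_le_card_nsmul _ _ _ fun τ _ => hstep (τ + 1)).trans_eq
          (by rw [card_range])) hstart
    _ = 1 / n + t * M / pT := by rw [nsmul_eq_mul]; ring

/-- For a column-stochastic nonnegative matrix `Q`, `p_T ∈ (0,1]`,
and a probability vector `π` with `Q π = π` and `π i ≥ p_T / n` for all `i`, the walk
distributions started from the uniform distribution `u` satisfy
`∑_{τ=0}^{t} ‖Q^τ u‖₂² ≤ 1/n + t ‖π‖_∞ / p_T`. -/
theorem walk_collision_sum_bound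
    (n : ℕ) (Q : Matrix (Fin n) (Fin n) ℝ) (pT : ℝ)
    (hQ0 : ∀ i j, 0 ≤ Q i j) (hQcol : ∀ j, ∑ i, Q i j = 1)
    (hpT0 : 0 < pT) (hpT1 : pT ≤ 1)
    (π : Fin n → ℝ) (hπ0 : ∀ i, 0 ≤ π i) (hπ1 : ∑ i, π i = 1)
    (hfix : Q.mulVec π = π) (hlb : ∀ i, pT / (n : ℝ) ≤ π i)
    (u : Fin n → ℝ) (hu : ∀ i, u i = 1 / (n : ℝ))
    (t : ℕ) :
    ∑ τ ∈ Finset.range (t + 1), ∑ i, (((Q ^ τ).mulVec u) i) ^ 2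
      ≤ 1 / (n : ℝ) + t * (⨆ i, |π i|) / pT :=
  walk_collision_sum_bound_general n Q pT hQ0 hQcol hpT0 π hfix hlb u hu t
end

section
/- Let Q be an n×n matrix with nonnegative entries whose columns each sum to 1, let p_T ∈ (0,1], and let π be a probability vector satisfying Qπ = π and π_i ≥ p_T/n for all i. Let u be the uniform distribution on [n]. Let (X_0,…,X_t) and (Y_0,…,Y_t) be two independent [n]-valued random processes such that for each τ, the random variables X_τ and Y_τ each have distribution Q^τ u. Then the probability that the two walks meet within t steps satisfies ℙ(∃ τ ∈ {0,…,t} : X_τ = Y_τ) ≤ 1/n + t·‖π‖_∞ / p_T, where ‖π‖_∞ denotes the maximal element of π. -/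
/-!
By independence, `ℙ(X_τ = Y_τ) ≤ ∑ᵢ q_τ(i)²`, where `q_τ = Q^τ u` is the common law, and this
collision probability of a probability vector is at most its largest entry: `1/n` at `τ = 0`.
For `τ ≥ 1`, `u ≤ π / p_T` entrywise, and `Q^τ` is nonnegative and fixes `π`, so
`q_τ ≤ π / p_T ≤ ‖π‖_∞ / p_T` entrywise. A union bound over `τ ≤ t` finishes.
-/

open MeasureTheory ProbabilityTheory

theorem sum_mul_self_le_of_sum_eq_one {ι R : Type*} [Fintype ι] [CommSemiring R]
    [PartialOrder R] [IsOrderedRing R] {p : ι → R} {c : R} (hp : ∀ i, 0 ≤ p i)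
    (hsum : ∑ i, p i = 1) (hpc : ∀ i, p i ≤ c) : ∑ i, p i * p i ≤ c := calc
  ∑ i, p i * p i ≤ ∑ i, c * p i :=
    Finset.sum_le_sum fun i _ => mul_le_mul_of_nonneg_right (hpc i) (hp i)
  _ = c := by rw [← Finset.mul_sum, hsum, mul_one]

namespace Matrix

variable {R m n : Type*} [Fintype n] [CommSemiring R] [PartialOrder R] [IsOrderedRing R]

theorem mulVec_mono_of_nonneg {M : Matrix m n R} (hM : ∀ i j, 0 ≤ M i j) {v w : n → R}
    (h : v ≤ w) : M *ᵥ v ≤ M *ᵥ w :=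
  fun i => Finset.sum_le_sum fun j _ => mul_le_mul_of_nonneg_left (h j) (hM i j)

theorem pow_mulVec_le_smul_of_mulVec_eq [DecidableEq n] {M : Matrix n n R}
    (hM : ∀ i j, 0 ≤ M i j) {π v : n → R} (hπ : M *ᵥ π = π) {c : R} (hv : v ≤ c • π) :
    ∀ k : ℕ, M ^ k *ᵥ v ≤ c • π
  | 0 => by rwa [pow_zero, one_mulVec]
  | k + 1 => calc
      M ^ (k + 1) *ᵥ v = M *ᵥ (M ^ k *ᵥ v) := by rw [pow_succ', mulVec_mulVec]
      _ ≤ M *ᵥ (c • π) := mulVec_mono_of_nonneg hM (pow_mulVec_le_smul_of_mulVec_eq hM hπ hv k)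
      _ = c • π := by rw [mulVec_smul, hπ]

end Matrix

namespace ProbabilityTheory.IndepFun

variable {Ω ι : Type*} [MeasurableSpace Ω] {μ : Measure Ω} [Fintype ι]
  [MeasurableSpace ι] [MeasurableSingletonClass ι] {f g : Ω → ι}

theorem measureReal_eq_le_sum (h : IndepFun f g μ) :
    μ.real {ω | f ω = g ω} ≤ ∑ i, μ.real (f ⁻¹' {i}) * μ.real (g ⁻¹' {i}) := by
  have hset : {ω | f ω = g ω} = ⋃ i, f ⁻¹' {i} ∩ g ⁻¹' {i} := by
    ext ω
    simp [eq_comm]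
  rw [hset]
  refine (measureReal_iUnion_fintype_le _).trans_eq (Finset.sum_congr rfl fun i _ => ?_)
  rw [measureReal_def, h.measure_inter_preimage_eq_mul _ _ (.singleton i) (.singleton i),
    ENNReal.toReal_mul, measureReal_def, measureReal_def]

theorem measureReal_eq_le_sum_mul_self (h : IndepFun f g μ) {p : ι → ℝ} (hp : ∀ i, 0 ≤ p i)
    (hf : ∀ i, μ {ω | f ω = i} = ENNReal.ofReal (p i))
    (hg : ∀ i, μ {ω | g ω = i} = ENNReal.ofReal (p i)) :
    μ.real {ω | f ω = g ω} ≤ ∑ i, p i * p i := by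
  refine h.measureReal_eq_le_sum.trans_eq (Finset.sum_congr rfl fun i _ => ?_)
  simp only [measureReal_def, Set.preimage, Set.mem_singleton_iff, hf, hg,
    ENNReal.toReal_ofReal (hp i)]

end ProbabilityTheory.IndepFun

open Matrix

theorem meeting_probability_pagerank_bound_general
    (n t : ℕ) (Q : Matrix (Fin n) (Fin n) ℝ) (pT : ℝ)
    (hQ0 : ∀ i j, 0 ≤ Q i j) (hQcol : ∀ j, ∑ i, Q i j = 1)
    (hpT0 : 0 < pT)
    (π : Fin n → ℝ)
    (hfix : Q.mulVec π = π) (hlb : ∀ i, pT / (n : ℝ) ≤ π i)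
    (u : Fin n → ℝ) (hu : ∀ i, u i = 1 / (n : ℝ))
    (Ω : Type*) [MeasurableSpace Ω] (μ : Measure Ω) [IsProbabilityMeasure μ]
    (X Y : Fin (t + 1) → Ω → Fin n)
    (hindep : IndepFun (fun ω τ => X τ ω) (fun ω τ => Y τ ω) μ)
    (hX : ∀ (τ : Fin (t + 1)) (i : Fin n),
      μ {ω | X τ ω = i} = ENNReal.ofReal (((Q ^ (τ : ℕ)).mulVec u) i))
    (hY : ∀ (τ : Fin (t + 1)) (i : Fin n),
      μ {ω | Y τ ω = i} = ENNReal.ofReal (((Q ^ (τ : ℕ)).mulVec u) i)) :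
    (μ {ω | ∃ τ, X τ ω = Y τ ω}).toReal ≤ 1 / (n : ℝ) + t * (⨆ i, π i) / pT := by
  have hn : (0 : ℝ) < n := by
    exact_mod_cast (X 0 (nonempty_of_isProbabilityMeasure μ).some).pos
  have hQ : Q ∈ colStochastic ℝ (Fin n) := mem_colStochastic_iff_sum.2 ⟨hQ0, hQcol⟩
  set q : ℕ → Fin n → ℝ := fun τ => Q ^ τ *ᵥ u with hq
  have hq0 : ∀ τ i, 0 ≤ q τ i := fun τ =>
    nonneg_mulVec_of_mem_colStochastic (pow_mem hQ τ) fun i => by rw [hu]; positivity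
  have hq_sum : ∀ τ, ∑ i, q τ i = 1 := fun τ => by
    rw [sum_mulVec_of_mem_colStochastic (pow_mem hQ τ)]
    simp [hu, hn.ne']
  have hu_le : u ≤ pT⁻¹ • π := fun i => by
    rw [hu, Pi.smul_apply, smul_eq_mul, inv_mul_eq_div, le_div_iff₀ hpT0, one_div_mul_eq_div]
    exact hlb i
  have hq_le : ∀ τ i, q τ i ≤ (⨆ i, π i) / pT := fun τ i => calc
    q τ i ≤ pT⁻¹ * π i := pow_mulVec_le_smul_of_mulVec_eq hQ0 hfix hu_le τ i
    _ ≤ (⨆ i, π i) / pT := by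
      rw [inv_mul_eq_div]
      gcongr
      exact le_ciSup (Set.finite_range π).bddAbove i
  have hmeet : ∀ τ : Fin (t + 1), μ.real {ω | X τ ω = Y τ ω} ≤ ∑ i, q τ i * q τ i := fun τ =>
    (hindep.comp (measurable_pi_apply τ) (measurable_pi_apply τ)).measureReal_eq_le_sum_mul_self
      (hq0 τ) (hX τ) (hY τ)
  rw [← measureReal_def, Set.ofPred_exists]
  calc μ.real (⋃ τ, {ω | X τ ω = Y τ ω})
      ≤ ∑ τ : Fin (t + 1), ∑ i, q τ i * q τ i :=
        (measureReal_iUnion_fintype_le _).trans (Finset.sum_le_sum fun τ _ => hmeet τ)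
    _ = ∑ i, q 0 i * q 0 i + ∑ τ : Fin t, ∑ i, q (τ + 1) i * q (τ + 1) i := Fin.sum_univ_succ _
    _ ≤ 1 / n + ∑ _τ : Fin t, (⨆ i, π i) / pT := by
      gcongr with τ
      · exact sum_mul_self_le_of_sum_eq_one (hq0 0) (hq_sum 0) fun i => by simp [hq, hu]
      · exact sum_mul_self_le_of_sum_eq_one (hq0 _) (hq_sum _) (hq_le _)
    _ = 1 / n + t * (⨆ i, π i) / pT := by
      rw [Finset.sum_const, Finset.card_univ, Fintype.card_fin, nsmul_eq_mul, mul_div_assoc]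

/-- Let `Q` be a column-stochastic nonnegative matrix, `p_T ∈ (0,1]`,
and `π` a probability vector with `Q π = π` and `π i ≥ p_T / n` for all `i`; let `u`
be the uniform distribution. If `(X_0, …, X_t)` and `(Y_0, …, Y_t)` are two
`[n]`-valued random processes, independent of one another, with `X_τ` and `Y_τ` each
distributed as `Q^τ u`, then
`ℙ(∃ τ ≤ t, X_τ = Y_τ) ≤ 1/n + t ‖π‖_∞ / p_T`. -/
theorem meeting_probability_pagerank_bound
    (n t : ℕ) (Q : Matrix (Fin n) (Fin n) ℝ) (pT : ℝ)
    (hQ0 : ∀ i j, 0 ≤ Q i j) (hQcol : ∀ j, ∑ i, Q i j = 1)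
    (hpT0 : 0 < pT) (hpT1 : pT ≤ 1)
    (π : Fin n → ℝ) (hπ0 : ∀ i, 0 ≤ π i) (hπ1 : ∑ i, π i = 1)
    (hfix : Q.mulVec π = π) (hlb : ∀ i, pT / (n : ℝ) ≤ π i)
    (u : Fin n → ℝ) (hu : ∀ i, u i = 1 / (n : ℝ))
    (Ω : Type*) [MeasurableSpace Ω] (μ : Measure Ω) [IsProbabilityMeasure μ]
    (X Y : Fin (t + 1) → Ω → Fin n)
    (hindep : IndepFun (fun ω τ => X τ ω) (fun ω τ => Y τ ω) μ)
    (hX : ∀ (τ : Fin (t + 1)) (i : Fin n),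
      μ {ω | X τ ω = i} = ENNReal.ofReal (((Q ^ (τ : ℕ)).mulVec u) i))
    (hY : ∀ (τ : Fin (t + 1)) (i : Fin n),
      μ {ω | Y τ ω = i} = ENNReal.ofReal (((Q ^ (τ : ℕ)).mulVec u) i)) :
    (μ {ω | ∃ τ, X τ ω = Y τ ω}).toReal ≤ 1 / (n : ℝ) + t * (⨆ i, π i) / pT :=
  meeting_probability_pagerank_bound_general n t Q pT hQ0 hQcol hpT0 π hfix hlb u hu Ω μ X Y hindep
    hX hY
end

section
/- Let G be a directed graph on n vertices in which every vertex has out-degree at least 1, with adjacency matrix A (A_{ij} = 1 if there is an edge from j to i, else 0) and transition matrix P given by P_{ij} = A_{ij}/d_out(j), where d_out(j) is the out-degree of j. Let p_T ∈ (0,1), Q = (1−p_T)P + (p_T/n)·J with J the n×n all-ones matrix, let π be the PageRank vector, i.e. the probability vector satisfying Qπ = π, and let u be the uniform distribution on [n]. Then for every integer t ≥ 0, the χ²-contrast of the t-step walk distribution with respect to π satisfies χ²(Q^t u; π) ≤ ((1−p_T)/p_T)·(1−p_T)^t. -/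
/-!
Since `Q π = π`, the deviation `Q^t u - π` equals `Q^t (u - π)`, and `Q` acts on mass-zero vectors
as `(1 - p_T) P`. By Cauchy–Schwarz, `((P v)_i)^2 ≤ (P π)_i · (P (v^2 / π))_i`, and the fixed-point
equation `π = (1 - p_T) P π + p_T / n` gives `(1 - p_T) (P π)_i ≤ π_i`; summing over `i` and using
that `P` preserves mass, each step multiplies `∑ v_i^2 / π_i` by at most `1 - p_T`. The fixed-point
equation also gives `π_i ≥ p_T / n`, whence `χ²(u; π) = ∑ 1 / (n^2 π_i) - 1 ≤ 1 / p_T - 1`.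
-/

open Matrix Finset

variable {ι : Type*} [Fintype ι]

noncomputable def chiSq (α β : ι → ℝ) : ℝ := ∑ i, (α i - β i) ^ 2 / β i

lemma chiSq_eq_sum_sq_div_sub_one {α β : ι → ℝ} (hβ : ∀ i, 0 < β i)
    (hα1 : ∑ i, α i = 1) (hβ1 : ∑ i, β i = 1) :
    chiSq α β = ∑ i, α i ^ 2 / β i - 1 := by
  have expand : ∀ i, (α i - β i) ^ 2 / β i = α i ^ 2 / β i - 2 * α i + β i := fun i => by
    field_simp [(hβ i).ne']
    ring
  simp only [chiSq, expand, sum_add_distrib, sum_sub_distrib, ← mul_sum, hα1, hβ1]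
  ring

lemma chiSq_uniform_le {π : ι → ℝ} {m : ℝ} (hm : 0 < m) (hπm : ∀ i, m ≤ π i)
    (hπ1 : ∑ i, π i = 1) :
    chiSq (fun _ => 1 / (Fintype.card ι : ℝ)) π ≤ 1 / (Fintype.card ι * m) - 1 := by
  have hπ : ∀ i, 0 < π i := fun i => hm.trans_le (hπm i)
  have : Nonempty ι := univ_nonempty_iff.mp (nonempty_of_sum_ne_zero (hπ1 ▸ one_ne_zero))
  have hcard : (Fintype.card ι : ℝ) ≠ 0 := Nat.cast_ne_zero.mpr Fintype.card_ne_zero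
  have hu1 : ∑ _i : ι, 1 / (Fintype.card ι : ℝ) = 1 := by
    simp [hcard]
  rw [chiSq_eq_sum_sq_div_sub_one hπ hu1 hπ1, sub_le_sub_iff_right]
  calc ∑ i, (1 / (Fintype.card ι : ℝ)) ^ 2 / π i
      ≤ ∑ _i : ι, (1 / (Fintype.card ι : ℝ)) ^ 2 / m :=
        sum_le_sum fun i _ => div_le_div_of_nonneg_left (sq_nonneg _) hm (hπm i)
    _ = 1 / (Fintype.card ι * m) := by
        rw [sum_const, card_univ, nsmul_eq_mul]
        field_simp

lemma sq_mulVec_le_mulVec_mul_mulVec {P : Matrix ι ι ℝ} (hP : ∀ i j, 0 ≤ P i j)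
    {π : ι → ℝ} (hπ : ∀ i, 0 < π i) (v : ι → ℝ) (i : ι) :
    (P *ᵥ v) i ^ 2 ≤ (P *ᵥ π) i * (P *ᵥ fun j => v j ^ 2 / π j) i :=
  sum_sq_le_sum_mul_sum_of_sq_le_mul _
    (fun j _ => mul_nonneg (hP i j) (hπ j).le)
    (fun j _ => mul_nonneg (hP i j) (div_nonneg (sq_nonneg _) (hπ j).le))
    (fun j _ => le_of_eq (by field_simp [(hπ j).ne']))

lemma sum_sq_mul_mulVec_div_le [DecidableEq ι] {P : Matrix ι ι ℝ}
    (hP : P ∈ colStochastic ℝ ι) {π : ι → ℝ} (hπ : ∀ i, 0 < π i) {c : ℝ} (hc : 0 ≤ c)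
    (hcπ : ∀ i, c * (P *ᵥ π) i ≤ π i) (v : ι → ℝ) :
    ∑ i, (c * (P *ᵥ v) i) ^ 2 / π i ≤ c * ∑ i, v i ^ 2 / π i := by
  set w : ι → ℝ := fun j => v j ^ 2 / π j
  have hw : ∀ i, 0 ≤ (P *ᵥ w) i :=
    nonneg_mulVec_of_mem_colStochastic hP fun j => div_nonneg (sq_nonneg _) (hπ j).le
  have pointwise : ∀ i, (c * (P *ᵥ v) i) ^ 2 / π i ≤ c * (P *ᵥ w) i := fun i => by
    rw [div_le_iff₀ (hπ i)]
    calc (c * (P *ᵥ v) i) ^ 2 = c * (c * (P *ᵥ v) i ^ 2) := by ring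
      _ ≤ c * (c * ((P *ᵥ π) i * (P *ᵥ w) i)) := by
          gcongr
          exact sq_mulVec_le_mulVec_mul_mulVec hP.1 hπ v i
      _ = c * (P *ᵥ w) i * (c * (P *ᵥ π) i) := by ring
      _ ≤ c * (P *ᵥ w) i * π i := mul_le_mul_of_nonneg_left (hcπ i) (mul_nonneg hc (hw i))
  calc ∑ i, (c * (P *ᵥ v) i) ^ 2 / π i ≤ ∑ i, c * (P *ᵥ w) i := sum_le_sum fun i _ => pointwise i
    _ = c * ∑ i, w i := by rw [← mul_sum, sum_mulVec_of_mem_colStochastic hP]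

lemma mem_colStochastic_of_eq_div_sum_col [DecidableEq ι] {A P : Matrix ι ι ℝ}
    (hA : ∀ i j, 0 ≤ A i j) (hdeg : ∀ j, 0 < ∑ i, A i j)
    (hP : ∀ i j, P i j = A i j / ∑ i', A i' j) : P ∈ colStochastic ℝ ι := by
  refine mem_colStochastic_iff_sum.mpr ⟨fun i j => ?_, fun j => ?_⟩
  · rw [hP]
    exact div_nonneg (hA i j) (hdeg j).le
  · simp only [hP, ← sum_div]
    exact div_self (hdeg j).ne'

section PageRank

variable {P : Matrix ι ι ℝ} {p : ℝ}

noncomputable def googleMatrix (p : ℝ) (P : Matrix ι ι ℝ) : Matrix ι ι ℝ :=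
  (1 - p) • P + (p / Fintype.card ι) • of fun _ _ => 1

lemma googleMatrix_mulVec_apply (v : ι → ℝ) (i : ι) :
    (googleMatrix p P *ᵥ v) i = (1 - p) * (P *ᵥ v) i + p / Fintype.card ι * ∑ j, v j := by
  simp [googleMatrix, mulVec, dotProduct, add_mul, sum_add_distrib, mul_sum, mul_assoc]

lemma sub_mul_mulVec_add_eq_of_googleMatrix_mulVec_eq_self {π : ι → ℝ}
    (hfix : googleMatrix p P *ᵥ π = π) (hπ1 : ∑ i, π i = 1) (i : ι) :
    (1 - p) * (P *ᵥ π) i + p / Fintype.card ι = π i := by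
  rw [← congrFun hfix i, googleMatrix_mulVec_apply, hπ1, mul_one]

variable [DecidableEq ι]

lemma googleMatrix_mem_colStochastic [Nonempty ι] (hP : P ∈ colStochastic ℝ ι)
    (hp0 : 0 ≤ p) (hp1 : p ≤ 1) : googleMatrix p P ∈ colStochastic ℝ ι := by
  refine mem_colStochastic_iff_sum.mpr ⟨fun i j => ?_, fun j => ?_⟩
  · simp only [googleMatrix, Matrix.add_apply, Matrix.smul_apply, of_apply, smul_eq_mul, mul_one]
    have := hP.1 i j
    have : 1 - p ≥ 0 := by linarith
    positivity
  · simp only [googleMatrix, Matrix.add_apply, Matrix.smul_apply, of_apply, smul_eq_mul, mul_one,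
      sum_add_distrib, ← mul_sum, sum_col_of_mem_colStochastic hP, sum_const, card_univ,
      nsmul_eq_mul]
    field_simp
    ring

lemma div_card_le_of_googleMatrix_mulVec_eq_self (hP : P ∈ colStochastic ℝ ι) (hp1 : p ≤ 1)
    {π : ι → ℝ} (hπ0 : ∀ i, 0 ≤ π i) (hfix : googleMatrix p P *ᵥ π = π)
    (hπ1 : ∑ i, π i = 1) (i : ι) : p / Fintype.card ι ≤ π i := by
  have := nonneg_mulVec_of_mem_colStochastic hP hπ0 i
  have : 0 ≤ 1 - p := by linarith
  rw [← sub_mul_mulVec_add_eq_of_googleMatrix_mulVec_eq_self hfix hπ1 i]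
  nlinarith

lemma chiSq_googleMatrix_mulVec_le (hP : P ∈ colStochastic ℝ ι) (hp0 : 0 ≤ p) (hp1 : p ≤ 1)
    {π : ι → ℝ} (hπ : ∀ i, 0 < π i) (hfix : googleMatrix p P *ᵥ π = π)
    (hπ1 : ∑ i, π i = 1) {α : ι → ℝ} (hα1 : ∑ i, α i = 1) :
    chiSq (googleMatrix p P *ᵥ α) π ≤ (1 - p) * chiSq α π := by
  have hdev : ∀ i, (googleMatrix p P *ᵥ α) i - π i = (1 - p) * (P *ᵥ (α - π)) i := fun i => by
    rw [← congrFun hfix i, ← Pi.sub_apply, ← mulVec_sub, googleMatrix_mulVec_apply]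
    simp [sum_sub_distrib, hα1, hπ1]
  have hcπ : ∀ i, (1 - p) * (P *ᵥ π) i ≤ π i := fun i => by
    rw [← sub_mul_mulVec_add_eq_of_googleMatrix_mulVec_eq_self hfix hπ1 i]
    have : 0 ≤ p / Fintype.card ι := by positivity
    linarith
  simp only [chiSq, hdev]
  exact sum_sq_mul_mulVec_div_le hP hπ (by linarith) hcπ (α - π)

lemma chiSq_pow_googleMatrix_mulVec_le (hP : P ∈ colStochastic ℝ ι)
    (hp0 : 0 ≤ p) (hp1 : p ≤ 1) {π : ι → ℝ} (hπ : ∀ i, 0 < π i)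
    (hfix : googleMatrix p P *ᵥ π = π) (hπ1 : ∑ i, π i = 1) {α : ι → ℝ}
    (hα1 : ∑ i, α i = 1) (t : ℕ) :
    chiSq (googleMatrix p P ^ t *ᵥ α) π ≤ (1 - p) ^ t * chiSq α π := by
  have : Nonempty ι := univ_nonempty_iff.mp (nonempty_of_sum_ne_zero (hπ1 ▸ one_ne_zero))
  have hQ := googleMatrix_mem_colStochastic hP hp0 hp1
  induction t with
  | zero => simp
  | succ t ih =>
    have hmass : ∑ i, (googleMatrix p P ^ t *ᵥ α) i = 1 := by
      rw [sum_mulVec_of_mem_colStochastic (pow_mem hQ t), hα1]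
    rw [pow_succ' (googleMatrix p P), ← mulVec_mulVec, pow_succ' (1 - p), mul_assoc]
    calc _ ≤ (1 - p) * chiSq (googleMatrix p P ^ t *ᵥ α) π :=
          chiSq_googleMatrix_mulVec_le hP hp0 hp1 hπ hfix hπ1 hmass
      _ ≤ _ := by gcongr

end PageRank

/-- Let `A` be the adjacency matrix of a directed graph on `n`
vertices where every vertex has out-degree at least `1` (`A i j = 1` iff there is an
edge from `j` to `i`), `P i j = A i j / d_out(j)` with `d_out(j) = ∑ i, A i j`,
`p_T ∈ (0,1)`, `Q = (1 - p_T) P + (p_T / n) J`, `π` the PageRank vector (`Q π = π`),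
and `u` the uniform distribution. Then for every `t ≥ 0`,
`χ²(Q^t u; π) ≤ ((1 - p_T)/p_T) (1 - p_T)^t`. -/
theorem chiSq_mixing_bound
    (n : ℕ) (hn : 0 < n) (A P : Matrix (Fin n) (Fin n) ℝ)
    (hA : ∀ i j, A i j = 0 ∨ A i j = 1)
    (hdeg : ∀ j, 1 ≤ ∑ i, A i j)
    (hP : ∀ i j, P i j = A i j / ∑ i', A i' j)
    (pT : ℝ) (hpT0 : 0 < pT) (hpT1 : pT < 1)
    (Q : Matrix (Fin n) (Fin n) ℝ)
    (hQ : Q = (1 - pT) • P + (pT / (n : ℝ)) • Matrix.of (fun _ _ => (1 : ℝ)))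
    (π : Fin n → ℝ) (hπ0 : ∀ i, 0 ≤ π i) (hπ1 : ∑ i, π i = 1)
    (hfix : Q.mulVec π = π)
    (u : Fin n → ℝ) (hu : ∀ i, u i = 1 / (n : ℝ))
    (t : ℕ) :
    ∑ i, (((Q ^ t).mulVec u) i - π i) ^ 2 / π i
      ≤ ((1 - pT) / pT) * (1 - pT) ^ t := by
  have : Nonempty (Fin n) := ⟨⟨0, hn⟩⟩
  have hPcol : P ∈ colStochastic ℝ (Fin n) :=
    mem_colStochastic_of_eq_div_sum_col
      (fun i j => by rcases hA i j with h | h <;> simp [h])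
      (fun j => one_pos.trans_le (hdeg j)) hP
  obtain rfl : Q = googleMatrix pT P := by simp [hQ, googleMatrix]
  obtain rfl : u = fun _ => 1 / (Fintype.card (Fin n) : ℝ) := by ext i; simp [hu]
  have hπlb := div_card_le_of_googleMatrix_mulVec_eq_self hPcol hpT1.le hπ0 hfix hπ1
  have hπ : ∀ i, 0 < π i := fun i =>
    (div_pos hpT0 (Nat.cast_pos.mpr Fintype.card_pos)).trans_le (hπlb i)
  have hu1 : ∑ _i : Fin n, 1 / (Fintype.card (Fin n) : ℝ) = 1 := by simp [hn.ne']
  calc chiSq (googleMatrix pT P ^ t *ᵥ _) π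
      ≤ (1 - pT) ^ t * chiSq (fun _ => 1 / (Fintype.card (Fin n) : ℝ)) π :=
        chiSq_pow_googleMatrix_mulVec_le hPcol hpT0.le hpT1.le hπ hfix hπ1 hu1 t
    _ ≤ (1 - pT) ^ t * (1 / (Fintype.card (Fin n) * (pT / Fintype.card (Fin n))) - 1) := by
        gcongr
        exact chiSq_uniform_le (by positivity) hπlb hπ1
    _ = (1 - pT) / pT * (1 - pT) ^ t := by
        simp only [Fintype.card_fin]
        field_simp
end

section
/- Let G be a directed graph on n vertices in which every vertex has out-degree at least 1, with transition matrix P given by P_{ij} = A_{ij}/d_out(j) for adjacency matrix A. Let p_T ∈ (0,1), Q = (1−p_T)P + (p_T/n)·J with J the n×n all-ones matrix, let π be the PageRank vector (the probability vector with Qπ = π), and let u be the uniform distribution on [n]. Fix integers t ≥ 0, 1 ≤ k ≤ n, N ≥ 1, and δ ∈ (0,1). Let s_1, …, s_N be independent [n]-valued random variables each with distribution Q^t u (the positions of N fully synchronized FrogWild walkers after t steps), and let π̂_N(i) = |{l : s_l = i}|/N be the empirical distribution. Then with probability at least 1 − δ, every subset Ŝ ⊆ [n] with |Ŝ| = k maximizing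 π̂_N(S) over subsets of cardinality k satisfies π(Ŝ) ≥ max_{T ⊆ [n], |T| = k} π(T) − 2·√((1−p_T)^{t+1}/p_T) − 2·√(k/(δN)). -/
/-!
Write `q = Qᵗ u` and measure the distance of two vectors by the largest mass difference they give a
set. For probability vectors `Q x - Q y = (1 - p_T) P (x - y)`, and a column-stochastic `P` does not
increase that distance, so `q` is within `(1 - p_T)^(t+1)` of `π` on every set; the exponent is
`t + 1` rather than `t` because the fixed-point equation gives `u - π = (1 - p_T) (u - P π)`.

Expanding over pairs of walkers, independence kills the cross terms and gives
`E ‖π̂_N - q‖₂² ≤ 1 / N`. By Markov's inequality `‖π̂_N - q‖₂² ≤ 1 / (δ N)` outside an event of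
probability at most `δ`, and there Cauchy–Schwarz gives `|π̂_N(S) - q(S)| ≤ √(k / (δ N))` for every
`|S| = k`. A maximiser of `π̂_N` therefore loses at most twice the total error against `π`.

The exceptional event is covered by finitely many atoms `{s = v}`, whose masses are the product
weights `∏ q(v l)` by independence; this uses only subadditivity, so the `s l` need not be
measurable.
-/

open MeasureTheory ProbabilityTheory Finset Matrix

section SetDiscrepancy

variable {ι κ : Type*} [Fintype ι]

lemma sum_mul_le_of_forall_sum_le {α z : ι → ℝ} {c : ℝ} (hα0 : ∀ j, 0 ≤ α j)
    (hα1 : ∀ j, α j ≤ 1) (hz : ∀ S : Finset ι, ∑ j ∈ S, z j ≤ c) :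
    ∑ j, α j * z j ≤ c := by
  calc ∑ j, α j * z j ≤ ∑ j, if 0 ≤ z j then z j else 0 :=
        sum_le_sum fun j _ => by split_ifs <;> nlinarith [hα0 j, hα1 j]
    _ = ∑ j ∈ univ.filter (0 ≤ z ·), z j := (sum_filter _ _).symm
    _ ≤ c := hz _

lemma abs_sum_mul_le_of_forall_abs_sum_le {α z : ι → ℝ} {c : ℝ} (hα0 : ∀ j, 0 ≤ α j)
    (hα1 : ∀ j, α j ≤ 1) (hz : ∀ S : Finset ι, |∑ j ∈ S, z j| ≤ c) :
    |∑ j, α j * z j| ≤ c := by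
  have hneg := sum_mul_le_of_forall_sum_le hα0 hα1 (z := -z) (c := c) fun S => by
    simpa [sum_neg_distrib] using neg_le.1 (neg_le_of_abs_le (hz S))
  simp only [Pi.neg_apply, mul_neg, sum_neg_distrib] at hneg
  exact abs_le.2 ⟨by linarith,
    sum_mul_le_of_forall_sum_le hα0 hα1 fun S => (le_abs_self _).trans (hz S)⟩

lemma abs_sum_mulVec_le [Fintype κ] {P : Matrix κ ι ℝ} (hP0 : ∀ i j, 0 ≤ P i j)
    (hP1 : ∀ j, ∑ i, P i j ≤ 1) {z : ι → ℝ} {c : ℝ} (hz : ∀ S : Finset ι, |∑ j ∈ S, z j| ≤ c)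
    (S : Finset κ) : |∑ i ∈ S, (P *ᵥ z) i| ≤ c := by
  have hswap : ∑ i ∈ S, (P *ᵥ z) i = ∑ j, (∑ i ∈ S, P i j) * z j := by
    simp only [mulVec, dotProduct, sum_mul]
    exact sum_comm
  rw [hswap]
  exact abs_sum_mul_le_of_forall_abs_sum_le (fun j => sum_nonneg fun i _ => hP0 i j)
    (fun j => (sum_le_sum_of_subset_of_nonneg (subset_univ S) fun i _ _ => hP0 i j).trans
      (hP1 j)) hz

lemma sum_le_one_of_mem_stdSimplex {x : ι → ℝ} (hx : x ∈ stdSimplex ℝ ι) (S : Finset ι) :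
    ∑ i ∈ S, x i ≤ 1 :=
  hx.2 ▸ sum_le_sum_of_subset_of_nonneg (subset_univ S) fun i _ _ => hx.1 i

lemma abs_sum_sub_le_one_of_mem_stdSimplex {x y : ι → ℝ} (hx : x ∈ stdSimplex ℝ ι)
    (hy : y ∈ stdSimplex ℝ ι) (S : Finset ι) : |∑ i ∈ S, (x i - y i)| ≤ 1 := by
  have hx0 : 0 ≤ ∑ i ∈ S, x i := sum_nonneg fun i _ => hx.1 i
  have hy0 : 0 ≤ ∑ i ∈ S, y i := sum_nonneg fun i _ => hy.1 i
  have hx1 := sum_le_one_of_mem_stdSimplex hx S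
  have hy1 := sum_le_one_of_mem_stdSimplex hy S
  rw [sum_sub_distrib, abs_le]
  constructor <;> linarith

end SetDiscrepancy

lemma mem_colStochastic_of_div_colSum {ι : Type*} [Fintype ι] [DecidableEq ι]
    {A P : Matrix ι ι ℝ} (hA : ∀ i j, 0 ≤ A i j) (hdeg : ∀ j, 0 < ∑ i, A i j)
    (hP : ∀ i j, P i j = A i j / ∑ i', A i' j) : P ∈ colStochastic ℝ ι := by
  rw [mem_colStochastic_iff_sum]
  refine ⟨fun i j => ?_, fun j => ?_⟩
  · rw [hP]
    exact div_nonneg (hA i j) (hdeg j).le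
  · simp_rw [hP, ← sum_div]
    exact div_self (hdeg j).ne'

section PageRank

variable {n : ℕ} {P Q : Matrix (Fin n) (Fin n) ℝ} {p : ℝ}

lemma uniform_mem_stdSimplex (hn : 0 < n) {u : Fin n → ℝ} (hu : ∀ i, u i = 1 / n) :
    u ∈ stdSimplex ℝ (Fin n) := by
  refine ⟨fun i => by rw [hu]; positivity, ?_⟩
  simp [hu, (Nat.cast_pos.2 hn).ne']

lemma pagerank_mulVec_apply (hQ : Q = (1 - p) • P + (p / n) • Matrix.of (fun _ _ => (1 : ℝ)))
    (x : Fin n → ℝ) (i : Fin n) : (Q *ᵥ x) i = (1 - p) * (P *ᵥ x) i + p / n * ∑ j, x j := by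
  subst hQ
  rw [add_mulVec, smul_mulVec, smul_mulVec]
  simp [mulVec, dotProduct]

lemma pagerank_mulVec_mem_stdSimplex (hn : 0 < n) (hP : P ∈ colStochastic ℝ (Fin n))
    (hp0 : 0 ≤ p) (hp1 : p ≤ 1)
    (hQ : Q = (1 - p) • P + (p / n) • Matrix.of (fun _ _ => (1 : ℝ)))
    {x : Fin n → ℝ} (hx : x ∈ stdSimplex ℝ (Fin n)) : Q *ᵥ x ∈ stdSimplex ℝ (Fin n) := by
  refine ⟨fun i => ?_, ?_⟩
  · rw [pagerank_mulVec_apply hQ, hx.2, mul_one]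
    have := nonneg_mulVec_of_mem_colStochastic hP hx.1 i
    exact add_nonneg (mul_nonneg (by linarith) this) (by positivity)
  · simp_rw [pagerank_mulVec_apply hQ]
    rw [sum_add_distrib, ← mul_sum, sum_mulVec_of_mem_colStochastic hP, hx.2, sum_const,
      card_univ, Fintype.card_fin, nsmul_eq_mul]
    field_simp
    ring

lemma pagerank_pow_mulVec_mem_stdSimplex (hn : 0 < n) (hP : P ∈ colStochastic ℝ (Fin n))
    (hp0 : 0 ≤ p) (hp1 : p ≤ 1)
    (hQ : Q = (1 - p) • P + (p / n) • Matrix.of (fun _ _ => (1 : ℝ)))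
    {x : Fin n → ℝ} (hx : x ∈ stdSimplex ℝ (Fin n)) (m : ℕ) :
    (Q ^ m) *ᵥ x ∈ stdSimplex ℝ (Fin n) := by
  induction m with
  | zero => simpa using hx
  | succ m ih =>
    rw [pow_succ', ← mulVec_mulVec]
    exact pagerank_mulVec_mem_stdSimplex hn hP hp0 hp1 hQ ih

theorem abs_sum_pagerank_pow_mulVec_sub_le (hn : 0 < n) (hP : P ∈ colStochastic ℝ (Fin n))
    (hp0 : 0 ≤ p) (hp1 : p ≤ 1)
    (hQ : Q = (1 - p) • P + (p / n) • Matrix.of (fun _ _ => (1 : ℝ)))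
    {π : Fin n → ℝ} (hπ : π ∈ stdSimplex ℝ (Fin n)) (hfix : Q *ᵥ π = π)
    {u : Fin n → ℝ} (hu : ∀ i, u i = 1 / n) (m : ℕ) (S : Finset (Fin n)) :
    |∑ i ∈ S, ((Q ^ m *ᵥ u) i - π i)| ≤ (1 - p) ^ (m + 1) := by
  have h1p : 0 ≤ 1 - p := by linarith
  have huΔ := uniform_mem_stdSimplex hn hu
  induction m generalizing S with
  | zero =>
    have hPπ : P *ᵥ π ∈ stdSimplex ℝ (Fin n) := ⟨nonneg_mulVec_of_mem_colStochastic hP hπ.1,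
      (sum_mulVec_of_mem_colStochastic hP).trans hπ.2⟩
    have hstep : ∀ i, (Q ^ 0 *ᵥ u) i - π i = (1 - p) * (u i - (P *ᵥ π) i) := fun i => by
      rw [pow_zero, one_mulVec]
      conv_lhs => rw [← hfix]
      rw [pagerank_mulVec_apply hQ, hπ.2, hu]
      ring
    rw [sum_congr rfl fun i _ => hstep i, ← mul_sum, abs_mul, abs_of_nonneg h1p, pow_one]
    exact mul_le_of_le_one_right h1p (abs_sum_sub_le_one_of_mem_stdSimplex huΔ hPπ S)
  | succ m ih =>
    have hx := pagerank_pow_mulVec_mem_stdSimplex hn hP hp0 hp1 hQ huΔ m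
    have hstep : ∀ i, (Q ^ (m + 1) *ᵥ u) i - π i = (1 - p) * (P *ᵥ (Q ^ m *ᵥ u - π)) i :=
      fun i => by
        rw [pow_succ', ← mulVec_mulVec]
        conv_lhs => rw [← hfix]
        rw [pagerank_mulVec_apply hQ, pagerank_mulVec_apply hQ, hx.2, hπ.2, mulVec_sub,
          Pi.sub_apply]
        ring
    rw [sum_congr rfl fun i _ => hstep i, ← mul_sum, abs_mul, abs_of_nonneg h1p,
      pow_succ' _ (m + 1)]
    refine mul_le_mul_of_nonneg_left ?_ h1p
    exact abs_sum_mulVec_le (fun i j => nonneg_of_mem_colStochastic hP)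
      (fun j => (sum_col_of_mem_colStochastic hP j).le) (fun S => by simpa using ih S) S

end PageRank

section Sampling

variable {ι α : Type*} [Fintype ι] [DecidableEq ι] [Fintype α] {q : α → ℝ}

noncomputable def empirical [DecidableEq α] (v : ι → α) (i : α) : ℝ :=
  (#{l | v l = i} : ℝ) / Fintype.card ι

lemma sum_prod_mul_mul_eq_ite (hq : ∑ a, q a = 1) {g : α → ℝ}
    (hg : ∑ a, q a * g a = 0) (l l' : ι) :
    ∑ v : ι → α, (∏ m, q (v m)) * (g (v l) * g (v l')) =
      if l = l' then ∑ a, q a * g a ^ 2 else 0 := by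
  have hfactor : ∀ v : ι → α, (∏ m, q (v m)) * (g (v l) * g (v l')) =
      ∏ m, q (v m) * ((if m = l then g (v m) else 1) * (if m = l' then g (v m) else 1)) := by
    intro v
    rw [prod_mul_distrib, prod_mul_distrib, prod_ite_eq', prod_ite_eq']
    simp
  simp_rw [hfactor]
  rw [← Fintype.prod_sum fun m a =>
    q a * ((if m = l then g a else 1) * (if m = l' then g a else 1))]
  split_ifs with h
  · subst h
    rw [prod_eq_single l (fun m _ hm => by simp [hm, hq]) (by simp)]
    simp [sq]
  · exact prod_eq_zero (mem_univ l) (by simp [h, hg])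

lemma sum_prod_mul_sum_sq (hq : ∑ a, q a = 1) {g : α → ℝ} (hg : ∑ a, q a * g a = 0) :
    ∑ v : ι → α, (∏ m, q (v m)) * (∑ l, g (v l)) ^ 2 =
      (Fintype.card ι : ℝ) * ∑ a, q a * g a ^ 2 := by
  calc ∑ v : ι → α, (∏ m, q (v m)) * (∑ l, g (v l)) ^ 2
      = ∑ l, ∑ l', ∑ v : ι → α, (∏ m, q (v m)) * (g (v l) * g (v l')) := by
        simp_rw [sq, sum_mul_sum, mul_sum]
        rw [sum_comm]
        exact sum_congr rfl fun l _ => sum_comm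
    _ = (Fintype.card ι : ℝ) * ∑ a, q a * g a ^ 2 := by
        simp [sum_prod_mul_mul_eq_ite hq hg]

lemma sum_prod_mul_sum_empirical_sub_sq_le [DecidableEq α] [Nonempty ι]
    (hq : q ∈ stdSimplex ℝ α) :
    ∑ v : ι → α, (∏ m, q (v m)) * ∑ i, (empirical v i - q i) ^ 2 ≤
      1 / (Fintype.card ι : ℝ) := by
  set c : ℝ := (Fintype.card ι : ℝ)
  have hc : 0 < c := Nat.cast_pos.2 Fintype.card_pos
  set g : α → α → ℝ := fun i a => (if a = i then 1 else 0) - q i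
  have hcentered : ∀ (v : ι → α) i, empirical v i - q i = (∑ l, g i (v l)) / c := by
    intro v i
    simp only [empirical, g, sum_sub_distrib, sum_boole, sum_const, card_univ, nsmul_eq_mul]
    field_simp
    exact mul_comm _ _
  have hmoment : ∀ i,
      ∑ v : ι → α, (∏ m, q (v m)) * (∑ l, g i (v l)) ^ 2 = c * (q i - q i ^ 2) := by
    intro i
    rw [sum_prod_mul_sum_sq hq.2]
    · congr 1
      simp [g, sub_sq, mul_add, mul_sub, sum_add_distrib, sum_sub_distrib, ← sum_mul, hq.2]
      ring
    · simp [g, mul_sub, ← sum_mul, hq.2]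
  calc ∑ v : ι → α, (∏ m, q (v m)) * ∑ i, (empirical v i - q i) ^ 2
      = ∑ i, (∑ v : ι → α, (∏ m, q (v m)) * (∑ l, g i (v l)) ^ 2) / c ^ 2 := by
        simp_rw [hcentered, div_pow, mul_sum, sum_div, mul_div_assoc]
        exact sum_comm
    _ ≤ ∑ i, q i / c := by
        refine sum_le_sum fun i _ => ?_
        rw [hmoment, sq c, mul_div_mul_left _ _ hc.ne']
        exact div_le_div_of_nonneg_right (by nlinarith [hq.1 i]) hc.le
    _ = 1 / c := by rw [← sum_div, hq.2]

lemma sum_filter_lt_le_div {β : Type*} {s : Finset β} {W F : β → ℝ} (hW : ∀ v ∈ s, 0 ≤ W v)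
    (hF : ∀ v ∈ s, 0 ≤ F v) {c : ℝ} (hc : 0 < c) :
    ∑ v ∈ s.filter (c < F ·), W v ≤ (∑ v ∈ s, W v * F v) / c := by
  rw [le_div_iff₀ hc, sum_mul]
  calc ∑ v ∈ s.filter (c < F ·), W v * c ≤ ∑ v ∈ s.filter (c < F ·), W v * F v :=
        sum_le_sum fun v hv => mul_le_mul_of_nonneg_left (mem_filter.1 hv).2.le
          (hW v (mem_filter.1 hv).1)
    _ ≤ ∑ v ∈ s, W v * F v := sum_le_sum_of_subset_of_nonneg (filter_subset _ _)
        fun v hv _ => mul_nonneg (hW v hv) (hF v hv)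

lemma sum_prod_filter_lt_sum_empirical_sub_sq_le [DecidableEq α] [Nonempty ι]
    (hq : q ∈ stdSimplex ℝ α) {δ : ℝ} (hδ : 0 < δ) :
    ∑ v ∈ univ.filter
        (fun v : ι → α => 1 / (δ * Fintype.card ι) < ∑ i, (empirical v i - q i) ^ 2),
      ∏ m, q (v m) ≤ δ := by
  have hc : (0 : ℝ) < Fintype.card ι := Nat.cast_pos.2 Fintype.card_pos
  calc _ ≤ (∑ v : ι → α, (∏ m, q (v m)) * ∑ i, (empirical v i - q i) ^ 2)
          / (1 / (δ * Fintype.card ι)) :=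
        sum_filter_lt_le_div (fun v _ => prod_nonneg fun m _ => hq.1 _)
          (fun v _ => sum_nonneg fun i _ => sq_nonneg _) (by positivity)
    _ ≤ 1 / Fintype.card ι / (1 / (δ * Fintype.card ι)) := by
        gcongr
        exact sum_prod_mul_sum_empirical_sub_sq_le hq
    _ = δ := by field_simp

lemma abs_sum_sub_le_sqrt_of_sum_sq_le {x y : α → ℝ} {c : ℝ} (h : ∑ i, (x i - y i) ^ 2 ≤ c)
    (S : Finset α) : |∑ i ∈ S, x i - ∑ i ∈ S, y i| ≤ Real.sqrt (#S * c) := by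
  rw [← sum_sub_distrib, ← Real.sqrt_sq_eq_abs]
  refine Real.sqrt_le_sqrt ((sq_sum_le_card_mul_sum_sq).trans ?_)
  gcongr
  exact (sum_le_sum_of_subset_of_nonneg (subset_univ S) fun i _ _ => sq_nonneg _).trans h

end Sampling

section IndependentSample

variable {Ω ι α : Type*} [MeasurableSpace Ω] {μ : Measure Ω} [Fintype ι]
  [MeasurableSpace α] [MeasurableSingletonClass α] {s : ι → Ω → α} {q : α → ℝ}

lemma ProbabilityTheory.iIndepFun.measure_forall_eq (hindep : iIndepFun s μ)
    (hdist : ∀ l i, μ {ω | s l ω = i} = ENNReal.ofReal (q i)) (hq : ∀ i, 0 ≤ q i) (v : ι → α) :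
    μ {ω | ∀ l, s l ω = v l} = ENNReal.ofReal (∏ l, q (v l)) := by
  have hinter : {ω | ∀ l, s l ω = v l} = ⋂ l, s l ⁻¹' {v l} := by
    ext ω
    simp
  rw [hinter, hindep.meas_iInter fun l => ⟨{v l}, measurableSet_singleton _, rfl⟩,
    ENNReal.ofReal_prod_of_nonneg fun l _ => hq (v l)]
  exact prod_congr rfl fun l _ => hdist l (v l)

lemma ProbabilityTheory.iIndepFun.ofReal_one_sub_le_measure [IsProbabilityMeasure μ]
    (hindep : iIndepFun s μ)
    (hdist : ∀ l i, μ {ω | s l ω = i} = ENNReal.ofReal (q i)) (hq : ∀ i, 0 ≤ q i)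
    {B : Finset (ι → α)} {δ : ℝ} (hB : ∑ v ∈ B, ∏ l, q (v l) ≤ δ) {E : Set Ω}
    (hE : ∀ ω, (fun l => s l ω) ∉ B → ω ∈ E) : ENNReal.ofReal (1 - δ) ≤ μ E := by
  have hδ : 0 ≤ δ := (sum_nonneg fun v _ => prod_nonneg fun l _ => hq (v l)).trans hB
  have hEc : μ Eᶜ ≤ ENNReal.ofReal δ :=
    calc μ Eᶜ ≤ μ (⋃ v ∈ B, {ω | ∀ l, s l ω = v l}) := measure_mono fun ω hω =>
          Set.mem_iUnion₂.2 ⟨_, not_not.1 (mt (hE ω) hω), fun l => rfl⟩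
      _ ≤ ∑ v ∈ B, μ {ω | ∀ l, s l ω = v l} := measure_biUnion_finset_le _ _
      _ = ENNReal.ofReal (∑ v ∈ B, ∏ l, q (v l)) := by
          simp_rw [hindep.measure_forall_eq hdist hq]
          exact (ENNReal.ofReal_sum_of_nonneg fun v _ => prod_nonneg fun l _ => hq (v l)).symm
      _ ≤ ENNReal.ofReal δ := ENNReal.ofReal_le_ofReal hB
  rw [ENNReal.ofReal_sub _ hδ, ENNReal.ofReal_one, tsub_le_iff_right, ← measure_univ (μ := μ)]
  exact (measure_univ_le_add_compl E).trans (by gcongr)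

end IndependentSample

lemma le_sqrt_div_of_le_one {x p : ℝ} (hx0 : 0 ≤ x) (hx1 : x ≤ 1) (hp0 : 0 < p) (hp1 : p ≤ 1) :
    x ≤ Real.sqrt (x / p) := by
  rw [Real.le_sqrt hx0 (div_nonneg hx0 hp0.le), le_div_iff₀ hp0]
  nlinarith [mul_le_mul_of_nonneg_left hp1 (sq_nonneg x)]

lemma sum_sub_two_mul_le_of_forall_le {α : Type*} {x q π : α → ℝ} {k : ℕ} {ε₁ ε₂ : ℝ}
    (hqπ : ∀ S : Finset α, |∑ i ∈ S, q i - ∑ i ∈ S, π i| ≤ ε₁)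
    (hxq : ∀ S : Finset α, #S = k → |∑ i ∈ S, x i - ∑ i ∈ S, q i| ≤ ε₂)
    {Shat : Finset α} (hShat : #Shat = k)
    (hmax : ∀ S : Finset α, #S = k → ∑ i ∈ S, x i ≤ ∑ i ∈ Shat, x i)
    {T : Finset α} (hT : #T = k) : ∑ i ∈ T, π i - 2 * ε₁ - 2 * ε₂ ≤ ∑ i ∈ Shat, π i := by
  have := hmax T hT
  have := abs_le.1 (hqπ T)
  have := abs_le.1 (hqπ Shat)
  have := abs_le.1 (hxq T hT)
  have := abs_le.1 (hxq Shat hShat)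
  linarith

theorem frogwild_captured_mass_general
    (n : ℕ) (hn : 0 < n) (A P : Matrix (Fin n) (Fin n) ℝ)
    (hA : ∀ i j, A i j = 0 ∨ A i j = 1)
    (hdeg : ∀ j, 1 ≤ ∑ i, A i j)
    (hP : ∀ i j, P i j = A i j / ∑ i', A i' j)
    (pT : ℝ) (hpT0 : 0 < pT) (hpT1 : pT < 1)
    (Q : Matrix (Fin n) (Fin n) ℝ)
    (hQ : Q = (1 - pT) • P + (pT / (n : ℝ)) • Matrix.of (fun _ _ => (1 : ℝ)))
    (π : Fin n → ℝ) (hπ0 : ∀ i, 0 ≤ π i) (hπ1 : ∑ i, π i = 1)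
    (hfix : Q.mulVec π = π)
    (u : Fin n → ℝ) (hu : ∀ i, u i = 1 / (n : ℝ))
    (t k N : ℕ) (hN : 1 ≤ N)
    (δ : ℝ) (hδ0 : 0 < δ)
    (Ω : Type*) [MeasurableSpace Ω] (μ : Measure Ω) [IsProbabilityMeasure μ]
    (s : Fin N → Ω → Fin n)
    (hindep : iIndepFun s μ)
    (hdist : ∀ l i, μ {ω | s l ω = i} = ENNReal.ofReal (((Q ^ t).mulVec u) i)) :
    ENNReal.ofReal (1 - δ) ≤
      μ {ω | ∀ Shat : Finset (Fin n), Shat.card = k →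
        (∀ S : Finset (Fin n), S.card = k →
          ∑ i ∈ S, (((Finset.univ.filter (fun l => s l ω = i)).card : ℝ) / N)
            ≤ ∑ i ∈ Shat, (((Finset.univ.filter (fun l => s l ω = i)).card : ℝ) / N)) →
        ∀ T : Finset (Fin n), T.card = k →
          ∑ i ∈ T, π i - 2 * Real.sqrt ((1 - pT) ^ (t + 1) / pT)
              - 2 * Real.sqrt (k / (δ * N))
            ≤ ∑ i ∈ Shat, π i} := by
  have hPst : P ∈ colStochastic ℝ (Fin n) := mem_colStochastic_of_div_colSum
    (fun i j => by rcases hA i j with h | h <;> simp [h]) (fun j => one_pos.trans_le (hdeg j)) hP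
  have hq := pagerank_pow_mulVec_mem_stdSimplex hn hPst hpT0.le hpT1.le hQ
    (uniform_mem_stdSimplex hn hu) t
  have : Nonempty (Fin N) := ⟨⟨0, hN⟩⟩
  have hbad := sum_prod_filter_lt_sum_empirical_sub_sq_le (ι := Fin N) hq hδ0
  rw [Fintype.card_fin] at hbad
  refine hindep.ofReal_one_sub_le_measure hdist hq.1 hbad fun ω hω Shat hShat hmax T hT => ?_
  have hgood : ∑ i, (empirical (fun l => s l ω) i - ((Q ^ t) *ᵥ u) i) ^ 2 ≤ 1 / (δ * N) := by
    simpa using hω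
  refine sum_sub_two_mul_le_of_forall_le (x := fun i => (#{l | s l ω = i} : ℝ) / N)
    (q := Q ^ t *ᵥ u) (fun S => ?_) (fun S hS => ?_) hShat hmax hT
  · rw [← sum_sub_distrib]
    refine (abs_sum_pagerank_pow_mulVec_sub_le hn hPst hpT0.le hpT1.le hQ ⟨hπ0, hπ1⟩ hfix hu t
      S).trans ?_
    exact le_sqrt_div_of_le_one (pow_nonneg (by linarith) _)
      (pow_le_one₀ (by linarith) (by linarith)) hpT0 hpT1.le
  · have hdev := abs_sum_sub_le_sqrt_of_sum_sq_le hgood S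
    simp only [empirical, Fintype.card_fin, hS, mul_one_div] at hdev
    exact hdev

/-- (FrogWild captured-mass guarantee, `p_s = 1`.) With the PageRank
setting (adjacency matrix `A` with all out-degrees ≥ 1, `P i j = A i j / d_out(j)`,
`p_T ∈ (0,1)`, `Q = (1-p_T) P + (p_T/n) J`, `Q π = π`, `u` uniform), fix `t ≥ 0`,
`1 ≤ k ≤ n`, `N ≥ 1`, `δ ∈ (0,1)`. Let `s_1, …, s_N` be i.i.d. with distribution
`Q^t u`, and `π̂_N(i) = |{l : s_l = i}| / N`. Then with probability at least `1 - δ`,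
every `Ŝ` of cardinality `k` maximizing `π̂_N(S)` over sets of cardinality `k`
satisfies `π(Ŝ) ≥ max_{|T| = k} π(T) - 2 √((1-p_T)^{t+1}/p_T) - 2 √(k/(δ N))`. -/
theorem frogwild_captured_mass
    (n : ℕ) (hn : 0 < n) (A P : Matrix (Fin n) (Fin n) ℝ)
    (hA : ∀ i j, A i j = 0 ∨ A i j = 1)
    (hdeg : ∀ j, 1 ≤ ∑ i, A i j)
    (hP : ∀ i j, P i j = A i j / ∑ i', A i' j)
    (pT : ℝ) (hpT0 : 0 < pT) (hpT1 : pT < 1)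
    (Q : Matrix (Fin n) (Fin n) ℝ)
    (hQ : Q = (1 - pT) • P + (pT / (n : ℝ)) • Matrix.of (fun _ _ => (1 : ℝ)))
    (π : Fin n → ℝ) (hπ0 : ∀ i, 0 ≤ π i) (hπ1 : ∑ i, π i = 1)
    (hfix : Q.mulVec π = π)
    (u : Fin n → ℝ) (hu : ∀ i, u i = 1 / (n : ℝ))
    (t k N : ℕ) (hk1 : 1 ≤ k) (hkn : k ≤ n) (hN : 1 ≤ N)
    (δ : ℝ) (hδ0 : 0 < δ) (hδ1 : δ < 1)
    (Ω : Type*) [MeasurableSpace Ω] (μ : Measure Ω) [IsProbabilityMeasure μ]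
    (s : Fin N → Ω → Fin n)
    (hindep : iIndepFun s μ)
    (hdist : ∀ l i, μ {ω | s l ω = i} = ENNReal.ofReal (((Q ^ t).mulVec u) i)) :
    ENNReal.ofReal (1 - δ) ≤
      μ {ω | ∀ Shat : Finset (Fin n), Shat.card = k →
        (∀ S : Finset (Fin n), S.card = k →
          ∑ i ∈ S, (((Finset.univ.filter (fun l => s l ω = i)).card : ℝ) / N)
            ≤ ∑ i ∈ Shat, (((Finset.univ.filter (fun l => s l ω = i)).card : ℝ) / N)) →
        ∀ T : Finset (Fin n), T.card = k →
          ∑ i ∈ T, π i - 2 * Real.sqrt ((1 - pT) ^ (t + 1) / pT)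
              - 2 * Real.sqrt (k / (δ * N))
            ≤ ∑ i ∈ Shat, π i} :=
  frogwild_captured_mass_general n hn A P hA hdeg hP pT hpT0 hpT1 Q hQ π hπ0 hπ1 hfix u hu t k N hN
    δ hδ0 Ω μ s hindep hdist
end
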